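/- arXiv:1708.07821 — 4 statements merged into one kernel-verified Lean document; each statement's English description precedes it below -/
import Mathlib

section
/- Let A ∈ ℝ^{n×d} satisfy AᵀA = I and ‖Aᵢ‖₂² ≤ C·d/n for every row i (for some constant C > 0), let b ∈ ℝⁿ, and let x* minimize x ↦ ‖Ax − b‖₁ over ℝᵈ. Then with x₀ = Aᵀb one has ‖x₀ − x*‖₂² ≤ (C·d/n)·‖Ax* − b‖₁². -/
open Matrix Finset

/-- The ℓ1 norm of a vector in ℝ^m. -/
noncomputable def l1norm {m : ℕ} (v : Fin m → ℝ) : ℝ := ∑ i, |v i|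

/-- The ℓ2 norm of a vector in ℝ^m. -/
noncomputable def l2norm {m : ℕ} (v : Fin m → ℝ) : ℝ := Real.sqrt (∑ i, (v i) ^ 2)

/-!
Since `AᵀA = 1`, the difference `Aᵀb − x` equals `Aᵀ(b − Ax)` for every `x`, and
`Aᵀr = ∑ᵢ rᵢ Aᵢ` is a combination of the rows of `A`. By the triangle inequality its
ℓ2 norm is at most `maxᵢ ‖Aᵢ‖₂ · ‖r‖₁ ≤ √(C d / n) · ‖r‖₁`.
-/

lemma l2norm_eq_norm {m : ℕ} (v : Fin m → ℝ) : l2norm v = ‖WithLp.toLp 2 v‖ := by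
  simp [l2norm, EuclideanSpace.norm_eq]

lemma l1norm_sub_comm {m : ℕ} (u v : Fin m → ℝ) : l1norm (u - v) = l1norm (v - u) := by
  simp only [l1norm, Pi.sub_apply, abs_sub_comm]

lemma norm_sum_smul_sq_le {ι E : Type*} [Fintype ι] [SeminormedAddCommGroup E]
    [NormedSpace ℝ E] (r : ι → ℝ) (v : ι → E) {K : ℝ} (hv : ∀ i, ‖v i‖ ^ 2 ≤ K) :
    ‖∑ i, r i • v i‖ ^ 2 ≤ K * (∑ i, |r i|) ^ 2 := by
  rcases isEmpty_or_nonempty ι with hι | ⟨⟨i₀⟩⟩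
  · simp
  have hK : 0 ≤ K := (sq_nonneg _).trans (hv i₀)
  have hnorm : ‖∑ i, r i • v i‖ ≤ √K * ∑ i, |r i| :=
    calc ‖∑ i, r i • v i‖ ≤ ∑ i, ‖r i • v i‖ := norm_sum_le _ _
      _ ≤ ∑ i, |r i| * √K := by
        gcongr with i
        rw [norm_smul, Real.norm_eq_abs]
        gcongr
        simpa using Real.abs_le_sqrt (hv i)
      _ = √K * ∑ i, |r i| := by rw [← Finset.sum_mul, mul_comm]
  calc ‖∑ i, r i • v i‖ ^ 2 ≤ (√K * ∑ i, |r i|) ^ 2 := by gcongr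
    _ = K * (∑ i, |r i|) ^ 2 := by rw [mul_pow, Real.sq_sqrt hK]

lemma l2norm_transpose_mulVec_sq_le {n d : ℕ} (A : Matrix (Fin n) (Fin d) ℝ) {K : ℝ}
    (hrow : ∀ i, l2norm (A i) ^ 2 ≤ K) (r : Fin n → ℝ) :
    l2norm (Aᵀ *ᵥ r) ^ 2 ≤ K * l1norm r ^ 2 := by
  have hrows : WithLp.toLp 2 (Aᵀ *ᵥ r) = ∑ i, r i • WithLp.toLp 2 (A i) := by
    rw [mulVec_transpose, vecMul_eq_sum, WithLp.toLp_sum]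
    simp [WithLp.toLp_smul]
  rw [l2norm_eq_norm, hrows]
  exact norm_sum_smul_sq_le r _ fun i => l2norm_eq_norm (A i) ▸ hrow i

lemma transpose_mulVec_sub_eq_of_transpose_mul_eq_one {m k R : Type*} [Fintype m] [Fintype k]
    [DecidableEq k] [CommRing R] {A : Matrix m k R} (hA : Aᵀ * A = 1) (b : m → R) (x : k → R) :
    Aᵀ *ᵥ b - x = Aᵀ *ᵥ (b - A *ᵥ x) := by
  rw [mulVec_sub, mulVec_mulVec, hA, one_mulVec]

theorem stmt1_general {n d : ℕ} (A : Matrix (Fin n) (Fin d) ℝ) (b : Fin n → ℝ)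
    (C : ℝ)
    (hiso : Aᵀ * A = 1)
    (hrow : ∀ i, (l2norm (A i)) ^ 2 ≤ C * d / n)
    (xstar : Fin d → ℝ) :
    (l2norm (Aᵀ.mulVec b - xstar)) ^ 2 ≤ (C * d / n) * (l1norm (A.mulVec xstar - b)) ^ 2 := by
  rw [transpose_mulVec_sub_eq_of_transpose_mul_eq_one hiso, l1norm_sub_comm]
  exact l2norm_transpose_mulVec_sq_le A hrow _

/-- If `A` is isotropic (`AᵀA = I`) and row-bounded (`‖Aᵢ‖₂² ≤ C·d/n`), and `x*` minimizes
`‖Ax − b‖₁`, then the initialization `x₀ = Aᵀ b` satisfies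
`‖x₀ − x*‖₂² ≤ (C·d/n)·‖Ax* − b‖₁²`. -/
theorem stmt1 {n d : ℕ} (A : Matrix (Fin n) (Fin d) ℝ) (b : Fin n → ℝ)
    (C : ℝ) (hC : 0 < C)
    (hiso : Aᵀ * A = 1)
    (hrow : ∀ i, (l2norm (A i)) ^ 2 ≤ C * d / n)
    (xstar : Fin d → ℝ)
    (hxstar : ∀ x : Fin d → ℝ, l1norm (A.mulVec xstar - b) ≤ l1norm (A.mulVec x - b)) :
    (l2norm (Aᵀ.mulVec b - xstar)) ^ 2 ≤ (C * d / n) * (l1norm (A.mulVec xstar - b)) ^ 2 :=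
  stmt1_general A b C hiso hrow xstar
end

section
/- Let A ∈ ℝ^{n×d}, b ∈ ℝⁿ, Ã ∈ ℝ^{N×d}, b̃ ∈ ℝ^N, let U ∈ ℝ^{d×d} be invertible, and let ε, δ > 0. Suppose ‖[Ã b̃]y‖₁ ≈_{1+ε} ‖[A b]y‖₁ for all y ∈ ℝ^{d+1}. Let x̃_U* minimize x ↦ ‖ÃUx − b̃‖₁, let x* minimize x ↦ ‖Ax − b‖₁, and let x̃ ∈ ℝᵈ satisfy ‖ÃUx̃ − b̃‖₁ ≤ (1+δ)‖ÃUx̃_U* − b̃‖₁. Then ‖A(Ux̃) − b‖₁ ≤ (1+ε)²(1+δ)·‖Ax* − b‖₁. -/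
open Matrix Finset

/-- `[A b]`: the matrix obtained from `A` by appending `b` as a last column. -/
def appendCol {n d : ℕ} (A : Matrix (Fin n) (Fin d) ℝ) (b : Fin n → ℝ) :
    Matrix (Fin n) (Fin (d + 1)) ℝ :=
  Matrix.of fun i => Fin.snoc (A i) (b i)

/-- `a ≈_κ c`, i.e. `(1/κ)·c ≤ a ≤ κ·c`. -/
def approx (κ a c : ℝ) : Prop := (1 / κ) * c ≤ a ∧ a ≤ κ * c

/-! The residual of `x` for the sketched problem is at most `κ` times its residual for the
original one and vice versa, as the embedding guarantee holds at `y = (x, -1)`. So an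
approximate sketched minimizer `x̃` loses one factor `κ` passing to the sketch, the factor
`1 + δ` against the sketched optimum, which is at most the sketched value at `U⁻¹x*`, and
another factor `κ` passing back. -/

theorem approx.le_mul_left {κ a c : ℝ} (h : approx κ a c) (hκ : 0 < κ) : c ≤ κ * a := by
  have h₁ := h.1
  rw [one_div_mul_eq_div, div_le_iff₀ hκ] at h₁
  linarith

theorem appendCol_mulVec_snoc_neg_one {n d : ℕ} (A : Matrix (Fin n) (Fin d) ℝ)
    (b : Fin n → ℝ) (x : Fin d → ℝ) :
    appendCol A b *ᵥ Fin.snoc x (-1) = A *ᵥ x - b := by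
  funext i
  simp only [mulVec, dotProduct, appendCol, of_apply, Fin.sum_univ_castSucc, Fin.snoc_castSucc,
    Fin.snoc_last, Pi.sub_apply]
  ring

theorem approx_l1norm_residual {n N d : ℕ} {κ : ℝ} {A : Matrix (Fin n) (Fin d) ℝ}
    {b : Fin n → ℝ} {At : Matrix (Fin N) (Fin d) ℝ} {bt : Fin N → ℝ}
    (h : ∀ y : Fin (d + 1) → ℝ,
      approx κ (l1norm (appendCol At bt *ᵥ y)) (l1norm (appendCol A b *ᵥ y)))
    (x : Fin d → ℝ) : approx κ (l1norm (At *ᵥ x - bt)) (l1norm (A *ᵥ x - b)) := by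
  simpa only [appendCol_mulVec_snoc_neg_one] using h (Fin.snoc x (-1))

theorem le_sq_mul_of_le_mul_of_le_mul_of_forall_le {α : Type*} {f g : α → ℝ} {κ c : ℝ}
    (hκ : 0 ≤ κ) (hc : 0 ≤ c) (hfg : ∀ x, f x ≤ κ * g x) (hgf : ∀ x, g x ≤ κ * f x)
    {xmin x : α} (hmin : ∀ y, g xmin ≤ g y) (hx : g x ≤ c * g xmin) (y : α) :
    f x ≤ κ ^ 2 * c * f y :=
  calc f x ≤ κ * g x := hfg x
    _ ≤ κ * (c * g xmin) := by gcongr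
    _ ≤ κ * (c * g y) := by gcongr; exact hmin y
    _ ≤ κ * (c * (κ * f y)) := by gcongr; exact hgf y
    _ = κ ^ 2 * c * f y := by ring

theorem stmt7_general {n N d : ℕ} (A : Matrix (Fin n) (Fin d) ℝ) (b : Fin n → ℝ)
    (At : Matrix (Fin N) (Fin d) ℝ) (bt : Fin N → ℝ)
    (U : Matrix (Fin d) (Fin d) ℝ) (hU : IsUnit U)
    (ε δ : ℝ) (hε : 0 < ε) (hδ : 0 < δ)
    (happrox : ∀ y : Fin (d + 1) → ℝ,
      approx (1 + ε) (l1norm ((appendCol At bt).mulVec y)) (l1norm ((appendCol A b).mulVec y)))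
    (xtU xstar xt : Fin d → ℝ)
    (hxtU : ∀ x : Fin d → ℝ,
      l1norm ((At * U).mulVec xtU - bt) ≤ l1norm ((At * U).mulVec x - bt))
    (hxt : l1norm ((At * U).mulVec xt - bt) ≤ (1 + δ) * l1norm ((At * U).mulVec xtU - bt)) :
    l1norm (A.mulVec (U.mulVec xt) - b)
      ≤ (1 + ε) ^ 2 * (1 + δ) * l1norm (A.mulVec xstar - b) := by
  have hres := approx_l1norm_residual happrox
  obtain ⟨w, rfl⟩ := mulVec_surjective_iff_isUnit.2 hU xstar
  simp only [← mulVec_mulVec] at hxtU hxt ⊢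
  exact le_sq_mul_of_le_mul_of_le_mul_of_forall_le (f := fun x ↦ l1norm (A *ᵥ (U *ᵥ x) - b))
    (by linarith) (by linarith) (fun x ↦ (hres _).le_mul_left (by linarith))
    (fun x ↦ (hres _).2) hxtU hxt w

/-- If `‖[Ã b̃]y‖₁ ≈_{1+ε} ‖[A b]y‖₁` for all `y`, `x̃_U*` minimizes `‖ÃUx − b̃‖₁`,
`x*` minimizes `‖Ax − b‖₁`, and `x̃` satisfies
`‖ÃUx̃ − b̃‖₁ ≤ (1+δ)‖ÃUx̃_U* − b̃‖₁`, then
`‖A(Ux̃) − b‖₁ ≤ (1+ε)²(1+δ)‖Ax* − b‖₁`. -/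
theorem stmt7 {n N d : ℕ} (A : Matrix (Fin n) (Fin d) ℝ) (b : Fin n → ℝ)
    (At : Matrix (Fin N) (Fin d) ℝ) (bt : Fin N → ℝ)
    (U : Matrix (Fin d) (Fin d) ℝ) (hU : IsUnit U)
    (ε δ : ℝ) (hε : 0 < ε) (hδ : 0 < δ)
    (happrox : ∀ y : Fin (d + 1) → ℝ,
      approx (1 + ε) (l1norm ((appendCol At bt).mulVec y)) (l1norm ((appendCol A b).mulVec y)))
    (xtU xstar xt : Fin d → ℝ)
    (hxtU : ∀ x : Fin d → ℝ,
      l1norm ((At * U).mulVec xtU - bt) ≤ l1norm ((At * U).mulVec x - bt))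
    (hxstar : ∀ x : Fin d → ℝ,
      l1norm (A.mulVec xstar - b) ≤ l1norm (A.mulVec x - b))
    (hxt : l1norm ((At * U).mulVec xt - bt) ≤ (1 + δ) * l1norm ((At * U).mulVec xtU - bt)) :
    l1norm (A.mulVec (U.mulVec xt) - b)
      ≤ (1 + ε) ^ 2 * (1 + δ) * l1norm (A.mulVec xstar - b) :=
  stmt7_general A b At bt U hU ε δ hε hδ happrox xtU xstar xt hxtU hxt
end

section
/- Let A ∈ ℝ^{n×d} satisfy (1/κ)I ⪯ AᵀA ⪯ κI for some κ ≥ 1, and ‖Aᵢ‖₂² ≤ C·d/n for every row i (some constant C > 0). Let b ∈ ℝⁿ, let x₀ = (AᵀA)⁻¹Aᵀb be the ℓ2 minimizer of x ↦ ‖Ax − b‖₂, and let x* minimize x ↦ ‖Ax − b‖₁. Then ‖x₀ − x*‖₂ ≤ κ·√(C·d/n)·‖Ax* − b‖₁. -/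
open Matrix Finset

/-- The Loewner order: `M ⪯ N` iff `N − M` is positive semidefinite. -/
def loewnerLE {d : ℕ} (M N : Matrix (Fin d) (Fin d) ℝ) : Prop := (N - M).PosSemidef

/-!
Put `w = x₀ − x*` and `r = b − Ax*`. The normal equations give `AᵀA w = Aᵀ r`, so the lower
Loewner bound and Cauchy–Schwarz give `‖w‖² / κ ≤ ⟪w, AᵀA w⟫ = ⟪w, Aᵀ r⟫ ≤ ‖w‖ ‖Aᵀ r‖`, i.e.
`‖w‖ ≤ κ ‖Aᵀ r‖`. Finally `Aᵀ r = ∑ rᵢ Aᵢ`, so by the triangle inequality and the row bound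
`‖Aᵀ r‖ ≤ √(C d / n) ‖r‖₁`.
-/

lemma l2norm_nonneg {m : ℕ} (v : Fin m → ℝ) : 0 ≤ l2norm v := Real.sqrt_nonneg _

lemma l2norm_sq {m : ℕ} (v : Fin m → ℝ) : l2norm v ^ 2 = v ⬝ᵥ v := by
  rw [l2norm, Real.sq_sqrt (by positivity)]
  simp [dotProduct, sq]

lemma dotProduct_le_l2norm_mul_l2norm {m : ℕ} (v w : Fin m → ℝ) :
    v ⬝ᵥ w ≤ l2norm v * l2norm w := by
  simpa [l2norm_eq_norm, EuclideanSpace.inner_eq_star_dotProduct, dotProduct_comm] using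
    real_inner_le_norm (WithLp.toLp 2 v) (WithLp.toLp 2 w)

lemma posDef_of_loewnerLE_smul_one {d : ℕ} {c : ℝ} (hc : 0 < c) {M : Matrix (Fin d) (Fin d) ℝ}
    (h : loewnerLE (c • 1) M) : M.PosDef := by
  simpa using PosDef.posSemidef_add h (PosDef.one.smul hc)

lemma mul_l2norm_le_l2norm_mulVec {d : ℕ} {c : ℝ} {M : Matrix (Fin d) (Fin d) ℝ}
    (h : loewnerLE (c • 1) M) (w : Fin d → ℝ) : c * l2norm w ≤ l2norm (M *ᵥ w) := by
  have hquad : c * l2norm w ^ 2 ≤ l2norm w * l2norm (M *ᵥ w) := by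
    have := h.dotProduct_mulVec_nonneg w
    simp only [star_trivial, sub_mulVec, dotProduct_sub, smul_mulVec, one_mulVec,
      dotProduct_smul, smul_eq_mul, sub_nonneg] at this
    rw [l2norm_sq]
    exact this.trans (dotProduct_le_l2norm_mul_l2norm _ _)
  rcases (l2norm_nonneg w).eq_or_lt with hw | hw
  · rw [← hw, mul_zero]
    exact l2norm_nonneg _
  · exact le_of_mul_le_mul_right (by linarith) hw

lemma l2norm_transpose_mulVec_le {n d : ℕ} (A : Matrix (Fin n) (Fin d) ℝ) {R : ℝ}
    (hA : ∀ i, l2norm (A i) ≤ R) (r : Fin n → ℝ) : l2norm (Aᵀ *ᵥ r) ≤ R * l1norm r := by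
  rw [mulVec_transpose, vecMul_eq_sum, l2norm_eq_norm, WithLp.toLp_sum, l1norm, mul_sum]
  refine (norm_sum_le _ _).trans (sum_le_sum fun i _ => ?_)
  rw [WithLp.toLp_smul, norm_smul, Real.norm_eq_abs, ← l2norm_eq_norm, mul_comm R]
  exact mul_le_mul_of_nonneg_left (hA i) (abs_nonneg _)

lemma transpose_mul_self_mulVec_sub {n d : ℕ} (A : Matrix (Fin n) (Fin d) ℝ)
    (hA : IsUnit (Aᵀ * A).det) (b : Fin n → ℝ) (x : Fin d → ℝ) :
    (Aᵀ * A) *ᵥ (((Aᵀ * A)⁻¹ * Aᵀ) *ᵥ b - x) = Aᵀ *ᵥ (b - A *ᵥ x) := by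
  rw [mulVec_sub, mulVec_sub, mulVec_mulVec, ← Matrix.mul_assoc, mul_nonsing_inv _ hA,
    Matrix.one_mul, mulVec_mulVec]

theorem stmt9_general {n d : ℕ} (A : Matrix (Fin n) (Fin d) ℝ) (b : Fin n → ℝ)
    (κ C : ℝ) (hκ : 1 ≤ κ)
    (hlo : loewnerLE ((1 / κ) • (1 : Matrix (Fin d) (Fin d) ℝ)) (Aᵀ * A))
    (hrow : ∀ i, (l2norm (A i)) ^ 2 ≤ C * d / n)
    (x0 : Fin d → ℝ) (hx0 : x0 = ((Aᵀ * A)⁻¹ * Aᵀ).mulVec b)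
    (xstar : Fin d → ℝ) :
    l2norm (x0 - xstar) ≤ κ * Real.sqrt (C * d / n) * l1norm (A.mulVec xstar - b) := by
  have hκ0 : 0 < κ := by linarith
  have hdet : IsUnit (Aᵀ * A).det :=
    (isUnit_iff_isUnit_det _).mp (posDef_of_loewnerLE_smul_one (by positivity) hlo).isUnit
  have hrow_sqrt : ∀ i, l2norm (A i) ≤ Real.sqrt (C * d / n) := fun i =>
    Real.le_sqrt_of_sq_le (hrow i)
  have hnormal : (Aᵀ * A) *ᵥ (x0 - xstar) = Aᵀ *ᵥ (b - A *ᵥ xstar) :=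
    hx0 ▸ transpose_mul_self_mulVec_sub A hdet b xstar
  have hlower := mul_l2norm_le_l2norm_mulVec hlo (x0 - xstar)
  rw [hnormal] at hlower
  calc l2norm (x0 - xstar) = κ * (1 / κ * l2norm (x0 - xstar)) := by field_simp
    _ ≤ κ * l2norm (Aᵀ *ᵥ (b - A *ᵥ xstar)) := by gcongr
    _ ≤ κ * (Real.sqrt (C * d / n) * l1norm (b - A *ᵥ xstar)) := by
      gcongr; exact l2norm_transpose_mulVec_le A hrow_sqrt _
    _ = κ * Real.sqrt (C * d / n) * l1norm (A.mulVec xstar - b) := by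
      rw [l1norm_sub_comm, mul_assoc]

/-- If `(1/κ)I ⪯ AᵀA ⪯ κI` and `‖Aᵢ‖₂² ≤ C·d/n` for every row, `x₀ = (AᵀA)⁻¹Aᵀb`
is the ℓ2 minimizer, and `x*` minimizes `‖Ax − b‖₁`, then
`‖x₀ − x*‖₂ ≤ κ·√(C·d/n)·‖Ax* − b‖₁`. -/
theorem stmt9 {n d : ℕ} (A : Matrix (Fin n) (Fin d) ℝ) (b : Fin n → ℝ)
    (κ C : ℝ) (hκ : 1 ≤ κ) (hC : 0 < C)
    (hlo : loewnerLE ((1 / κ) • (1 : Matrix (Fin d) (Fin d) ℝ)) (Aᵀ * A))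
    (hhi : loewnerLE (Aᵀ * A) (κ • (1 : Matrix (Fin d) (Fin d) ℝ)))
    (hrow : ∀ i, (l2norm (A i)) ^ 2 ≤ C * d / n)
    (x0 : Fin d → ℝ) (hx0 : x0 = ((Aᵀ * A)⁻¹ * Aᵀ).mulVec b)
    (xstar : Fin d → ℝ)
    (hxstar : ∀ x : Fin d → ℝ, l1norm (A.mulVec xstar - b) ≤ l1norm (A.mulVec x - b)) :
    l2norm (x0 - xstar) ≤ κ * Real.sqrt (C * d / n) * l1norm (A.mulVec xstar - b) :=
  stmt9_general A b κ C hκ hlo hrow x0 hx0 xstar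
end

section
/- Let A ∈ ℝ^{n×d} have full column rank, let w ∈ ℝⁿ be strictly positive weights satisfying the ℓ1 Lewis-weight equation w_j² = A_j (AᵀW⁻¹A)⁻¹ A_jᵀ with W = diag(w), let h > 0, and let p ∈ ℝⁿ be positive with (1/γ)·w_j·h ≤ p_j ≤ γ·w_j·h for all j and some γ ≥ 1. Let Ã ∈ ℝ^{N×d} be a matrix each of whose rows is a rescaled row of A: Ãᵢ = (1/p_{σ(i)})·A_{σ(i)} for some map σ : {1,…,N} → {1,…,n}, and suppose Ã has full column rank and (1/κ)·(1/h)·AᵀW⁻¹A ⪯ ÃᵀÃ ⪯ κ·(1/h)·AᵀW⁻¹A for some κ ≥ 1. Then for every row i of Ã, (1/(κγ²))·(1/h) ≤ τᵢ(Ã) ≤ κγ²·(1/h). -/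
open Matrix Finset

/-- The leverage score of row `i` of a matrix `M`: `τᵢ(M) = Mᵢ (MᵀM)⁻¹ Mᵢᵀ`. -/
noncomputable def levScore {n d : ℕ} (M : Matrix (Fin n) (Fin d) ℝ) (i : Fin n) : ℝ :=
  M i ⬝ᵥ ((Mᵀ * M)⁻¹).mulVec (M i)

/-!
With `G = (1/h)·AᵀW⁻¹A`, the Loewner sandwich `G/κ ⪯ ÃᵀÃ ⪯ κG` inverts to
`(1/κ)·G⁻¹ ⪯ (ÃᵀÃ)⁻¹ ⪯ κ·G⁻¹`, so `τᵢ(Ã)` lies within a factor `κ` of `ÃᵢG⁻¹Ãᵢᵀ`.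
For `Ãᵢ = A_j / p_j` the Lewis-weight equation makes this `h·(w_j/p_j)²`, and
`p_j ≈_γ w_j h` puts `w_j/p_j` between `1/(γh)` and `γ/h`.
-/

namespace Matrix

theorem inv_smul₀ {n K : Type*} [Fintype n] [DecidableEq n] [Field K] (c : K) (M : Matrix n n K) :
    (c • M)⁻¹ = c⁻¹ • M⁻¹ := by
  rcases eq_or_ne c 0 with rfl | hc
  · simp
  by_cases hM : IsUnit M.det
  · exact inv_smul' M (Units.mk0 c hc) hM
  · have hcM : ¬IsUnit (c • M).det := by
      rwa [det_smul, IsUnit.mul_iff, and_iff_right (isUnit_iff_ne_zero.2 (pow_ne_zero _ hc))]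
    rw [nonsing_inv_apply_not_isUnit _ hM, nonsing_inv_apply_not_isUnit _ hcM, smul_zero]

variable {n : Type*} [Fintype n] [DecidableEq n]

theorem PosDef.dotProduct_inv_mulVec_le {P Q : Matrix n n ℝ} (hP : P.PosDef)
    (hPQ : (Q - P).PosSemidef) (x : n → ℝ) :
    x ⬝ᵥ Q⁻¹ *ᵥ x ≤ x ⬝ᵥ P⁻¹ *ᵥ x := by
  have hQ : Q.PosDef := by simpa using hP.add_posSemidef hPQ
  set u := P⁻¹ *ᵥ x
  set v := Q⁻¹ *ᵥ x
  have hu : P *ᵥ u = x := by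
    rw [mulVec_mulVec, mul_nonsing_inv _ ((isUnit_iff_isUnit_det _).mp hP.isUnit), one_mulVec]
  have hv : Q *ᵥ v = x := by
    rw [mulVec_mulVec, mul_nonsing_inv _ ((isUnit_iff_isUnit_det _).mp hQ.isUnit), one_mulVec]
  have hPsymm : v ⬝ᵥ P *ᵥ u = u ⬝ᵥ P *ᵥ v := by
    rw [dotProduct_mulVec, ← mulVec_transpose, ← conjTranspose_eq_transpose_of_trivial,
      hP.isHermitian.eq, dotProduct_comm]
  -- completing the square: `(u - v)ᵀ P (u - v) ≥ 0` and `vᵀ P v ≤ vᵀ Q v = vᵀ x`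
  have hsq : 0 ≤ (u - v) ⬝ᵥ P *ᵥ (u - v) := by
    simpa using hP.posSemidef.dotProduct_mulVec_nonneg (u - v)
  have hPQv : v ⬝ᵥ P *ᵥ v ≤ v ⬝ᵥ Q *ᵥ v := by
    have := hPQ.dotProduct_mulVec_nonneg v
    simp only [star_trivial, sub_mulVec, dotProduct_sub] at this
    linarith
  rw [mulVec_sub, dotProduct_sub, sub_dotProduct, sub_dotProduct, ← hPsymm, hu] at hsq
  rw [hv] at hPQv
  rw [dotProduct_comm x, dotProduct_comm x]
  linarith

end Matrix

section LeverageScore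

variable {N d : ℕ} {M : Matrix (Fin N) (Fin d) ℝ}

theorem le_levScore_of_loewnerLE {Q : Matrix (Fin d) (Fin d) ℝ} (hM : (Mᵀ * M).PosDef)
    (hQ : loewnerLE (Mᵀ * M) Q) (i : Fin N) : M i ⬝ᵥ Q⁻¹ *ᵥ M i ≤ levScore M i :=
  hM.dotProduct_inv_mulVec_le hQ (M i)

theorem levScore_le_of_loewnerLE {P : Matrix (Fin d) (Fin d) ℝ} (hP : P.PosDef)
    (hPM : loewnerLE P (Mᵀ * M)) (i : Fin N) : levScore M i ≤ M i ⬝ᵥ P⁻¹ *ᵥ M i :=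
  hP.dotProduct_inv_mulVec_le hPM (M i)

end LeverageScore

theorem div_mem_Icc_of_approx {w p h γ : ℝ} (hw : 0 < w) (hh : 0 < h) (hγ : 0 < γ)
    (hpw : (1 / γ) * (w * h) ≤ p ∧ p ≤ γ * (w * h)) :
    w / p ∈ Set.Icc (1 / (γ * h)) (γ / h) := by
  obtain ⟨hp_lo, hp_hi⟩ := hpw
  have hp : 0 < p := lt_of_lt_of_le (by positivity) hp_lo
  constructor
  · rw [div_le_div_iff₀ (by positivity) hp]
    linarith
  · rw [div_le_div_iff₀ hp hh]
    calc w * h = γ * (1 / γ * (w * h)) := by field_simp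
      _ ≤ γ * p := by gcongr

theorem stmt16_general {n N d : ℕ} (A : Matrix (Fin n) (Fin d) ℝ)
    (w : Fin n → ℝ) (hw : ∀ j, 0 < w j)
    (hlewis : ∀ j, (w j) ^ 2 =
      A j ⬝ᵥ ((Aᵀ * (Matrix.diagonal w)⁻¹ * A)⁻¹).mulVec (A j))
    (h γ κ : ℝ) (hh : 0 < h) (hγ : 1 ≤ γ) (hκ : 1 ≤ κ)
    (p : Fin n → ℝ)
    (hpw : ∀ j, (1 / γ) * (w j * h) ≤ p j ∧ p j ≤ γ * (w j * h))
    (σ : Fin N → Fin n)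
    (At : Matrix (Fin N) (Fin d) ℝ)
    (hAtrows : ∀ i, At i = (1 / p (σ i)) • A (σ i))
    (hAtrank : IsUnit (Atᵀ * At))
    (hlo : loewnerLE ((1 / κ) • ((1 / h) • (Aᵀ * (Matrix.diagonal w)⁻¹ * A))) (Atᵀ * At))
    (hhi : loewnerLE (Atᵀ * At) (κ • ((1 / h) • (Aᵀ * (Matrix.diagonal w)⁻¹ * A)))) :
    ∀ i, (1 / (κ * γ ^ 2)) * (1 / h) ≤ levScore At i ∧
         levScore At i ≤ κ * γ ^ 2 * (1 / h) := by
  have hκ0 : 0 < κ := zero_lt_one.trans_le hκ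
  have hγ0 : 0 < γ := zero_lt_one.trans_le hγ
  set G := (1 / h) • (Aᵀ * (Matrix.diagonal w)⁻¹ * A)
  have hS : (Atᵀ * At).PosDef :=
    (posSemidef_conjTranspose_mul_self At).posDef_iff_isUnit.mpr hAtrank
  have hG : G.PosDef := by
    simpa [smul_smul, hκ0.ne'] using (hS.add_posSemidef hhi).smul (inv_pos.2 hκ0)
  intro i
  obtain ⟨hratio_lo, hratio_hi⟩ := div_mem_Icc_of_approx (hw (σ i)) hh hγ0 (hpw (σ i))
  have hquad (c : ℝ) : At i ⬝ᵥ (c • G)⁻¹ *ᵥ At i = h / c * (w (σ i) / p (σ i)) ^ 2 := by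
    rw [smul_smul, Matrix.inv_smul₀, hAtrows, smul_mulVec, mulVec_smul, smul_dotProduct,
      dotProduct_smul, dotProduct_smul, ← hlewis]
    simp only [smul_eq_mul]
    field_simp
  constructor
  · calc (1 / (κ * γ ^ 2)) * (1 / h) = h / κ * (1 / (γ * h)) ^ 2 := by field_simp
      _ ≤ h / κ * (w (σ i) / p (σ i)) ^ 2 := by gcongr
      _ = At i ⬝ᵥ (κ • G)⁻¹ *ᵥ At i := (hquad κ).symm
      _ ≤ levScore At i := le_levScore_of_loewnerLE hS hhi i
  · calc levScore At i ≤ At i ⬝ᵥ ((1 / κ) • G)⁻¹ *ᵥ At i :=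
          levScore_le_of_loewnerLE (hG.smul (by positivity)) hlo i
      _ = h / (1 / κ) * (w (σ i) / p (σ i)) ^ 2 := hquad _
      _ ≤ h / (1 / κ) * (γ / h) ^ 2 := by gcongr; exact le_trans (by positivity) hratio_lo
      _ = κ * γ ^ 2 * (1 / h) := by field_simp

/-- Sampling by (approximate) ℓ1 Lewis weights gives approximately equal leverage
scores: if `w` are the Lewis weights of `A`, `p_j ≈_γ w_j·h`, each row of `Ã` is
`(1/p_{σ(i)})·A_{σ(i)}`, and `ÃᵀÃ ≈_κ (1/h)·AᵀW⁻¹A` in the Loewner order, then every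
leverage score of `Ã` satisfies `(1/(κγ²))·(1/h) ≤ τᵢ(Ã) ≤ κγ²·(1/h)`. -/
theorem stmt16 {n N d : ℕ} (A : Matrix (Fin n) (Fin d) ℝ)
    (hA : IsUnit (Aᵀ * A))
    (w : Fin n → ℝ) (hw : ∀ j, 0 < w j)
    (hlewis : ∀ j, (w j) ^ 2 =
      A j ⬝ᵥ ((Aᵀ * (Matrix.diagonal w)⁻¹ * A)⁻¹).mulVec (A j))
    (h γ κ : ℝ) (hh : 0 < h) (hγ : 1 ≤ γ) (hκ : 1 ≤ κ)
    (p : Fin n → ℝ) (hp : ∀ j, 0 < p j)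
    (hpw : ∀ j, (1 / γ) * (w j * h) ≤ p j ∧ p j ≤ γ * (w j * h))
    (σ : Fin N → Fin n)
    (At : Matrix (Fin N) (Fin d) ℝ)
    (hAtrows : ∀ i, At i = (1 / p (σ i)) • A (σ i))
    (hAtrank : IsUnit (Atᵀ * At))
    (hlo : loewnerLE ((1 / κ) • ((1 / h) • (Aᵀ * (Matrix.diagonal w)⁻¹ * A))) (Atᵀ * At))
    (hhi : loewnerLE (Atᵀ * At) (κ • ((1 / h) • (Aᵀ * (Matrix.diagonal w)⁻¹ * A)))) :
    ∀ i, (1 / (κ * γ ^ 2)) * (1 / h) ≤ levScore At i ∧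
         levScore At i ≤ κ * γ ^ 2 * (1 / h) :=
  stmt16_general A w hw hlewis h γ κ hh hγ hκ p hpw σ At hAtrows hAtrank hlo hhi
end
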